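/- arXiv:1901.03795 — 2 statements merged into one kernel-verified Lean document; each statement's English description precedes it below -/
import Mathlib

section
/- Let S be a finite multiset of vectors in ℤ², each equal to (1,1), (−1,0), or (0,−1), with at least 2 elements, whose sum is (m,n). Let t be a rational number with 0 < t < 1 such that tm and tn are both integers. Then there exists a sub-multiset of S whose sum of vectors equals (tm, tn). -/
/-!
Let `a`, `b`, `c` be the multiplicities of `(1,1)`, `(-1,0)`, `(0,-1)` in `S`, so `m = a - b` and
`n = a - c`. A sub-multiset with multiplicities `p ≤ a`, `q ≤ b`, `r ≤ c` sums to `(p - q, p - r)`,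
so we need an integer `p` with `max 0 (max m' n') ≤ p ≤ min a (min (b + m') (c + n'))` and then
`q = p - m'`, `r = p - n'`. The rational number `t * a` lies in this interval (it is the
`p`-coordinate of the scaled multiplicities `t • (a, b, c)`), so its integer lower endpoint does.
-/

namespace Multiset

theorem eq_replicate_add_replicate_add_replicate {α : Type*} [DecidableEq α] {S : Multiset α}
    {u v w : α} (huv : u ≠ v) (huw : u ≠ w) (hvw : v ≠ w)
    (hS : ∀ x ∈ S, x = u ∨ x = v ∨ x = w) :
    S = replicate (S.count u) u + replicate (S.count v) v + replicate (S.count w) w := by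
  ext x
  simp only [count_add, count_replicate]
  by_cases hxu : x = u
  · subst hxu; simp [Ne.symm huv, Ne.symm huw]
  by_cases hxv : x = v
  · subst hxv; simp [huv, Ne.symm hvw]
  by_cases hxw : x = w
  · subst hxw; simp [huw, hvw]
  have hx : x ∉ S := fun hx => by rcases hS x hx with h | h | h <;> contradiction
  simp [count_eq_zero_of_notMem hx, Ne.symm hxu, Ne.symm hxv, Ne.symm hxw]

end Multiset

open Multiset

theorem sum_replicate_unit_directions (p q r : ℕ) :
    (replicate p ((1, 1) : ℤ × ℤ) + replicate q (-1, 0) + replicate r (0, -1)).sum =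
      ((p : ℤ) - q, (p : ℤ) - r) := by
  simp [sum_replicate, sub_eq_add_neg]

theorem exists_counts_of_scaled_counts {a b c : ℕ} {t : ℚ} (ht0 : 0 ≤ t) (ht1 : t ≤ 1)
    {m' n' : ℤ} (hm' : (m' : ℚ) = t * ((a : ℚ) - b)) (hn' : (n' : ℚ) = t * ((a : ℚ) - c)) :
    ∃ p q r : ℕ, p ≤ a ∧ q ≤ b ∧ r ≤ c ∧ (p : ℤ) - q = m' ∧ (p : ℤ) - r = n' := by
  have hta : t * a ≤ a := mul_le_of_le_one_left (Nat.cast_nonneg a) ht1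
  have htb : t * b ≤ b := mul_le_of_le_one_left (Nat.cast_nonneg b) ht1
  have htc : t * c ≤ c := mul_le_of_le_one_left (Nat.cast_nonneg c) ht1
  have hta0 : 0 ≤ t * a := mul_nonneg ht0 (Nat.cast_nonneg a)
  have htb0 : 0 ≤ t * b := mul_nonneg ht0 (Nat.cast_nonneg b)
  have htc0 : 0 ≤ t * c := mul_nonneg ht0 (Nat.cast_nonneg c)
  set p : ℤ := max 0 (max m' n')
  have hp_le : (p : ℚ) ≤ t * a := by
    simp only [p, Int.cast_max, Int.cast_zero, max_le_iff]
    refine ⟨hta0, ?_, ?_⟩ <;> linarith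
  have hpa : p ≤ a := by exact_mod_cast hp_le.trans hta
  have hpb : p ≤ b + m' := by exact_mod_cast (show (p : ℚ) ≤ b + m' by linarith)
  have hpc : p ≤ c + n' := by exact_mod_cast (show (p : ℚ) ≤ c + n' by linarith)
  have hm'p : m' ≤ p := (le_max_left m' n').trans (le_max_right 0 _)
  have hn'p : n' ≤ p := (le_max_right m' n').trans (le_max_right 0 _)
  refine ⟨p.toNat, (p - m').toNat, (p - n').toNat, ?_, ?_, ?_, ?_, ?_⟩ <;> omega

theorem stmt_2_general (S : Multiset (ℤ × ℤ))
    (hS : ∀ v ∈ S, v = (1, 1) ∨ v = (-1, 0) ∨ v = (0, -1))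
    (m n : ℤ) (hsum : S.sum = (m, n))
    (t : ℚ) (ht0 : 0 < t) (ht1 : t < 1)
    (m' n' : ℤ) (hm' : (m' : ℚ) = t * (m : ℚ)) (hn' : (n' : ℚ) = t * (n : ℚ)) :
    ∃ T : Multiset (ℤ × ℤ), T ≤ S ∧ T.sum = (m', n') := by
  set a := S.count (1, 1)
  set b := S.count (-1, 0)
  set c := S.count (0, -1)
  have hS_eq : S = replicate a (1, 1) + replicate b (-1, 0) + replicate c (0, -1) :=
    eq_replicate_add_replicate_add_replicate (by decide) (by decide) (by decide) hS
  have hmn : ((a : ℤ) - b, (a : ℤ) - c) = (m, n) := by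
    rw [← hsum, hS_eq, sum_replicate_unit_directions]
  obtain ⟨rfl, rfl⟩ := Prod.mk.inj hmn
  obtain ⟨p, q, r, hpa, hqb, hrc, hm'pq, hn'pr⟩ :=
    exists_counts_of_scaled_counts ht0.le ht1.le (by simpa using hm') (by simpa using hn')
  refine ⟨replicate p (1, 1) + replicate q (-1, 0) + replicate r (0, -1), ?_, ?_⟩
  · rw [hS_eq]
    gcongr
  · rw [sum_replicate_unit_directions, hm'pq, hn'pr]

theorem stmt_2 (S : Multiset (ℤ × ℤ))
    (hS : ∀ v ∈ S, v = (1, 1) ∨ v = (-1, 0) ∨ v = (0, -1))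
    (hcard : 2 ≤ Multiset.card S)
    (m n : ℤ) (hsum : S.sum = (m, n))
    (t : ℚ) (ht0 : 0 < t) (ht1 : t < 1)
    (m' n' : ℤ) (hm' : (m' : ℚ) = t * (m : ℚ)) (hn' : (n' : ℚ) = t * (n : ℚ)) :
    ∃ T : Multiset (ℤ × ℤ), T ≤ S ∧ T.sum = (m', n') :=
  stmt_2_general S hS m n hsum t ht0 ht1 m' n' hm' hn'
end

section
/- Let k ≥ 4 points P₁, P₂, P₃, P₄ ∈ ℝ² with P₂ ≠ P₃, and place coordinates so that P₂ = (0,0), P₃ = (c, 0) with c > 0, and P₁ = (p, q) with q < 0. Then at least one of the following three pairs of rays has nonempty intersection: (i) the ray from P₁ through P₂ and the ray from P₄ through P₃; (ii) the ray from P₁ through P₂ and the ray from P₄ in direction P₂ − P₃; (iii) the ray from P₄ through P₃ and the ray from P₁ in direction P₃ − P₂. (Here 'ray from X through Y' means {X + t(Y − X) : t ≥ 0}, requiring X ≠ Y; if P₄ coincides with a relevant point, interpret the corresponding intersection as nonempty.) -/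
/-!
Write `P₄ = (a, b)`. The signs of `σ = q a - p b` and `τ = σ + c (b - q)`, the cross products
of `P₂ - P₁` resp. `P₃ - P₁` with `P₄ - P₁`, tell on which side of the lines `P₁P₂` and `P₁P₃`
the point `P₄` lies. If `P₄` is in the closed wedge to the left of both lines, the rays `P₁P₂`
and `P₄P₃` meet. Otherwise either `P₄` lies right of `P₁P₂` and not below `P₁`, so the leftward
ray from `P₄` crosses the ray `P₁P₂`, or `P₄` lies right of `P₁P₃` and below `P₁`, so the ray
`P₄P₃` climbs to height `q` to the right of `P₁`.
-/

section

variable {c p q a b : ℝ}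

theorem ray_P₁P₂_meets_ray_P₄P₃ (hc : 0 < c) (hq : q < 0) (hσ : 0 ≤ q * a - p * b)
    (hτ : 0 ≤ q * a - p * b + c * (b - q)) :
    ∃ t s : ℝ, 0 ≤ t ∧ 0 ≤ s ∧
      ((p, q) : ℝ × ℝ) + t • (((0, 0) : ℝ × ℝ) - (p, q))
        = (a, b) + s • (((c, 0) : ℝ × ℝ) - (a, b)) := by
  have hD : 0 < q * a - p * b - q * c := by nlinarith
  have hD0 := hD.ne'
  refine ⟨(q * a - p * b + c * (b - q)) / (q * a - p * b - q * c),
    (q * a - p * b) / (q * a - p * b - q * c), by positivity, by positivity, ?_⟩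
  simp only [Prod.mk_sub_mk, Prod.smul_mk, smul_eq_mul, Prod.mk_add_mk, Prod.mk.injEq]
  constructor <;> field_simp <;> ring

theorem ray_P₁P₂_meets_leftward_ray (hc : 0 < c) (hq : q < 0) (hqb : q ≤ b)
    (hσ : q * a - p * b ≤ 0) :
    ∃ t s : ℝ, 0 ≤ t ∧ 0 ≤ s ∧
      ((p, q) : ℝ × ℝ) + t • (((0, 0) : ℝ × ℝ) - (p, q))
        = (a, b) + s • (((0, 0) : ℝ × ℝ) - ((c, 0) : ℝ × ℝ)) := by
  refine ⟨(q - b) / q, (q * a - p * b) / (c * q), div_nonneg_of_nonpos (by linarith) hq.le,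
    div_nonneg_of_nonpos hσ (by nlinarith), ?_⟩
  have hc0 := hc.ne'
  have hq0 := hq.ne
  simp only [Prod.mk_sub_mk, Prod.smul_mk, smul_eq_mul, Prod.mk_add_mk, Prod.mk.injEq]
  constructor <;> field_simp <;> ring

theorem ray_P₄P₃_meets_rightward_ray (hc : 0 < c) (hb : b < 0) (hbq : b ≤ q)
    (hτ : q * a - p * b + c * (b - q) ≤ 0) :
    ∃ t s : ℝ, 0 ≤ t ∧ 0 ≤ s ∧
      ((a, b) : ℝ × ℝ) + t • (((c, 0) : ℝ × ℝ) - (a, b))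
        = (p, q) + s • (((c, 0) : ℝ × ℝ) - ((0, 0) : ℝ × ℝ)) := by
  refine ⟨(b - q) / b, (q * a - p * b + c * (b - q)) / (c * b),
    div_nonneg_of_nonpos (by linarith) hb.le, div_nonneg_of_nonpos hτ (by nlinarith), ?_⟩
  have hc0 := hc.ne'
  have hb0 := hb.ne
  simp only [Prod.mk_sub_mk, Prod.smul_mk, smul_eq_mul, Prod.mk_add_mk, Prod.mk.injEq]
  constructor <;> field_simp <;> ring

end

theorem stmt_17 (c p q : ℝ) (hc : 0 < c) (hq : q < 0) (P₄ : ℝ × ℝ) :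
    (∃ t s : ℝ, 0 ≤ t ∧ 0 ≤ s ∧
      ((p, q) : ℝ × ℝ) + t • (((0, 0) : ℝ × ℝ) - (p, q))
        = P₄ + s • (((c, 0) : ℝ × ℝ) - P₄)) ∨
    (∃ t s : ℝ, 0 ≤ t ∧ 0 ≤ s ∧
      ((p, q) : ℝ × ℝ) + t • (((0, 0) : ℝ × ℝ) - (p, q))
        = P₄ + s • (((0, 0) : ℝ × ℝ) - ((c, 0) : ℝ × ℝ))) ∨
    (∃ t s : ℝ, 0 ≤ t ∧ 0 ≤ s ∧
      P₄ + t • (((c, 0) : ℝ × ℝ) - P₄)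
        = ((p, q) : ℝ × ℝ) + s • (((c, 0) : ℝ × ℝ) - ((0, 0) : ℝ × ℝ))) := by
  obtain ⟨a, b⟩ := P₄
  rcases le_or_gt q b with hqb | hbq
  · have hshift : 0 ≤ c * (b - q) := mul_nonneg hc.le (by linarith)
    rcases le_or_gt (q * a - p * b) 0 with hσ | hσ
    · exact Or.inr (Or.inl (ray_P₁P₂_meets_leftward_ray hc hq hqb hσ))
    · exact Or.inl (ray_P₁P₂_meets_ray_P₄P₃ hc hq hσ.le (by linarith))
  · have hshift : c * (b - q) < 0 := mul_neg_of_pos_of_neg hc (by linarith)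
    rcases le_or_gt (q * a - p * b + c * (b - q)) 0 with hτ | hτ
    · exact Or.inr (Or.inr (ray_P₄P₃_meets_rightward_ray hc (by linarith) hbq.le hτ))
    · exact Or.inl (ray_P₁P₂_meets_ray_P₄P₃ hc hq (by linarith) hτ.le)
end
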